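/- arXiv:2407.03153 — 2 statements merged into one kernel-verified Lean document; each statement's English description precedes it below -/
import Mathlib

section
/- Let ℓ : ℝ^d → ℝ be convex and differentiable with L-Lipschitz gradient (L > 0). If gradient descent is run for k steps with learning rate α ≤ 1/L starting from θ⁽⁰⁾, then ℓ(θ⁽ᵏ⁾) − ℓ(θ*) ≤ ‖θ⁽⁰⁾ − θ*‖² / (2kα), where θ* is a global minimizer of ℓ. -/
/-!
Since the gradient is `L`-Lipschitz, `ℓ` lies below its tangent paraboloids of curvature `L`
(the descent lemma), so for `α ≤ 1 / L` a step decreases `ℓ` by at least `α / 2 ‖∇ℓ‖²`.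
Adding the convexity inequality `ℓ θ ≤ ℓ θ* + ⟪∇ℓ θ, θ - θ*⟫` and expanding the square gives
`2α (ℓ θ⁽ⁱ⁺¹⁾ - ℓ θ*) ≤ ‖θ⁽ⁱ⁾ - θ*‖² - ‖θ⁽ⁱ⁺¹⁾ - θ*‖²`. These bounds telescope, and since the
values `ℓ θ⁽ⁱ⁾` decrease, their sum over `i < k` is at least `k` times the last one.
-/

open Set
open scoped RealInnerProductSpace

section Gradient

variable {E : Type*} [NormedAddCommGroup E] [InnerProductSpace ℝ E] [CompleteSpace E]
  {f : E → ℝ} {g : E → E}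

theorem HasGradientAt.hasDerivAt_comp_add_smul {f' x v : E} {t : ℝ}
    (hf : HasGradientAt f f' (x + t • v)) :
    HasDerivAt (fun s : ℝ => f (x + s • v)) ⟪f', v⟫ t := by
  have hline : HasDerivAt (fun s : ℝ => x + s • v) v t := by
    simpa using ((hasDerivAt_id t).smul_const v).const_add x
  have h := hf.hasFDerivAt.comp_hasDerivAt t hline
  simp only [InnerProductSpace.toDual_apply_apply] at h
  exact h

theorem ConvexOn.add_inner_gradient_le (hf : ConvexOn ℝ univ f) {f' x : E}
    (hx : HasGradientAt f f' x) (y : E) : f x + ⟪f', y - x⟫ ≤ f y := by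
  have hline : ConvexOn ℝ univ (fun t : ℝ => f (x + t • (y - x))) := by
    simpa [Function.comp_def, AffineMap.lineMap_apply, add_comm] using
      hf.comp_affineMap (AffineMap.lineMap x y)
  have hderiv := (show HasGradientAt f f' (x + (0 : ℝ) • (y - x)) by simpa using hx)
    |>.hasDerivAt_comp_add_smul
  have h := hline.le_slope_of_hasDerivAt (mem_univ 0) (mem_univ 1) one_pos hderiv
  simp only [slope_def_field, zero_smul, one_smul, add_zero, add_sub_cancel, sub_zero,
    div_one] at h
  linarith

theorem le_add_inner_add_sq_of_lipschitz_gradient (hf : ∀ x, HasGradientAt f (g x) x) {L : ℝ}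
    (hg : ∀ x y, ‖g x - g y‖ ≤ L * ‖x - y‖) (x y : E) :
    f y ≤ f x + ⟪g x, y - x⟫ + L / 2 * ‖y - x‖ ^ 2 := by
  set v := y - x
  let φ : ℝ → ℝ := fun t => f (x + t • v) - (t * ⟪g x, v⟫ + L / 2 * ‖v‖ ^ 2 * t ^ 2)
  let φ' : ℝ → ℝ := fun t => ⟪g (x + t • v) - g x, v⟫ - L * ‖v‖ ^ 2 * t
  have hφ : ∀ t, HasDerivAt φ (φ' t) t := fun t => by
    have h := ((hf (x + t • v)).hasDerivAt_comp_add_smul (v := v)).sub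
      (((hasDerivAt_id t).mul_const ⟪g x, v⟫).add
        ((hasDerivAt_pow 2 t).const_mul (L / 2 * ‖v‖ ^ 2)))
    refine h.congr_deriv ?_
    show _ = ⟪g (x + t • v) - g x, v⟫ - L * ‖v‖ ^ 2 * t
    rw [inner_sub_left]
    norm_num
    ring
  have hφ'_nonpos : ∀ t ∈ interior (Ici (0 : ℝ)), φ' t ≤ 0 := by
    intro t ht
    rw [interior_Ici, mem_Ioi] at ht
    suffices ⟪g (x + t • v) - g x, v⟫ ≤ L * ‖v‖ ^ 2 * t by simpa [φ'] using this
    have hdist : ‖(x + t • v) - x‖ = t * ‖v‖ := by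
      rw [add_sub_cancel_left, norm_smul, Real.norm_of_nonneg ht.le]
    calc ⟪g (x + t • v) - g x, v⟫ ≤ ‖g (x + t • v) - g x‖ * ‖v‖ := real_inner_le_norm _ _
      _ ≤ L * (t * ‖v‖) * ‖v‖ := by
        gcongr
        exact hdist ▸ hg _ _
      _ = L * ‖v‖ ^ 2 * t := by ring
  have hanti : AntitoneOn φ (Ici 0) :=
    antitoneOn_of_hasDerivWithinAt_nonpos (convex_Ici 0)
      (fun t _ => (hφ t).continuousAt.continuousWithinAt)
      (fun t _ => (hφ t).hasDerivWithinAt) hφ'_nonpos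
  have := hanti (mem_Ici.2 le_rfl) (mem_Ici.2 zero_le_one) zero_le_one
  simp only [φ, one_smul, zero_smul, add_zero, v, add_sub_cancel] at this
  linarith

theorem apply_gradient_step_le (hf : ∀ x, HasGradientAt f (g x) x) {L α : ℝ}
    (hg : ∀ x y, ‖g x - g y‖ ≤ L * ‖x - y‖) (hα : 0 ≤ α) (hαL : α * L ≤ 1) (x : E) :
    f (x - α • g x) ≤ f x - α / 2 * ‖g x‖ ^ 2 := by
  have h := le_add_inner_add_sq_of_lipschitz_gradient hf hg x (x - α • g x)
  rw [sub_sub_cancel_left, inner_neg_right, real_inner_smul_right, real_inner_self_eq_norm_sq,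
    norm_neg, norm_smul, Real.norm_of_nonneg hα] at h
  nlinarith [mul_nonneg hα (sq_nonneg ‖g x‖)]

theorem ConvexOn.mul_sub_le_of_gradient_step (hconv : ConvexOn ℝ univ f)
    (hf : ∀ x, HasGradientAt f (g x) x) {L α : ℝ} (hg : ∀ x y, ‖g x - g y‖ ≤ L * ‖x - y‖)
    (hα : 0 ≤ α) (hαL : α * L ≤ 1) (x z : E) :
    2 * α * (f (x - α • g x) - f z) ≤ ‖x - z‖ ^ 2 - ‖x - α • g x - z‖ ^ 2 := by
  have hstep := apply_gradient_step_le hf hg hα hαL x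
  have hsupp := hconv.add_inner_gradient_le (hf x) z
  have hdist :
      ‖x - α • g x - z‖ ^ 2 = ‖x - z‖ ^ 2 - 2 * α * ⟪g x, x - z⟫ + α ^ 2 * ‖g x‖ ^ 2 := by
    rw [sub_right_comm, norm_sub_sq_real, real_inner_smul_right, real_inner_comm, norm_smul,
      Real.norm_of_nonneg hα]
    ring
  have hinner : ⟪g x, z - x⟫ = -⟪g x, x - z⟫ := by rw [← inner_neg_right, neg_sub]
  rw [hdist]
  nlinarith

end Gradient

theorem Antitone.natCast_mul_le_of_le_sub_succ {a r : ℕ → ℝ} (ha : Antitone a)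
    (hr : ∀ i, 0 ≤ r i) (h : ∀ i, a (i + 1) ≤ r i - r (i + 1)) (k : ℕ) : k * a k ≤ r 0 := by
  suffices ∀ k : ℕ, k * a k + r k ≤ r 0 by linarith [this k, hr k]
  intro k
  induction k with
  | zero => simp
  | succ k ih =>
    have := mul_le_mul_of_nonneg_left (ha (Nat.le_succ k)) k.cast_nonneg
    push_cast
    linarith [h k]

theorem gradient_descent_convergence_general (d : ℕ)
    (ℓ : EuclideanSpace ℝ (Fin d) → ℝ)
    (g : EuclideanSpace ℝ (Fin d) → EuclideanSpace ℝ (Fin d))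
    (L α : ℝ) (hL : 0 < L) (hα : 0 < α) (hαL : α ≤ 1 / L)
    (hconv : ConvexOn ℝ Set.univ ℓ)
    (hgrad : ∀ θ, HasGradientAt ℓ (g θ) θ)
    (hlip : ∀ θ₁ θ₂, ‖g θ₁ - g θ₂‖ ≤ L * ‖θ₁ - θ₂‖)
    (θstar : EuclideanSpace ℝ (Fin d))
    (θ : ℕ → EuclideanSpace ℝ (Fin d))
    (hstep : ∀ i : ℕ, θ (i + 1) = θ i - α • g (θ i))
    (k : ℕ) (hk : 1 ≤ k) :
    ℓ (θ k) - ℓ θstar ≤ ‖θ 0 - θstar‖ ^ 2 / (2 * k * α) := by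
  have hαL' : α * L ≤ 1 := by rwa [le_div_iff₀ hL] at hαL
  have hdecrease : Antitone fun i => 2 * α * (ℓ (θ i) - ℓ θstar) :=
    antitone_nat_of_succ_le fun i => by
      have := apply_gradient_step_le hgrad hlip hα.le hαL' (θ i)
      rw [hstep i]
      gcongr
      linarith [mul_nonneg hα.le (sq_nonneg ‖g (θ i)‖)]
  have htelescope := hdecrease.natCast_mul_le_of_le_sub_succ
    (r := fun i => ‖θ i - θstar‖ ^ 2) (fun i => sq_nonneg _) (fun i => by
      simpa only [hstep i] using
        hconv.mul_sub_le_of_gradient_step hgrad hlip hα.le hαL' (θ i) θstar) k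
  have hk' : (0 : ℝ) < k := by exact_mod_cast hk
  rw [le_div_iff₀ (by positivity)]
  linarith

/-- Convergence rate of gradient descent for convex functions with Lipschitz gradient:
after `k` steps with learning rate `α ≤ 1/L`,
`ℓ(θ⁽ᵏ⁾) − ℓ(θ*) ≤ ‖θ⁽⁰⁾ − θ*‖² / (2kα)`. -/
theorem gradient_descent_convergence (d : ℕ)
    (ℓ : EuclideanSpace ℝ (Fin d) → ℝ)
    (g : EuclideanSpace ℝ (Fin d) → EuclideanSpace ℝ (Fin d))
    (L α : ℝ) (hL : 0 < L) (hα : 0 < α) (hαL : α ≤ 1 / L)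
    (hconv : ConvexOn ℝ Set.univ ℓ)
    (hgrad : ∀ θ, HasGradientAt ℓ (g θ) θ)
    (hlip : ∀ θ₁ θ₂, ‖g θ₁ - g θ₂‖ ≤ L * ‖θ₁ - θ₂‖)
    (θstar : EuclideanSpace ℝ (Fin d)) (hmin : ∀ x, ℓ θstar ≤ ℓ x)
    (θ : ℕ → EuclideanSpace ℝ (Fin d))
    (hstep : ∀ i : ℕ, θ (i + 1) = θ i - α • g (θ i))
    (k : ℕ) (hk : 1 ≤ k) :
    ℓ (θ k) - ℓ θstar ≤ ‖θ 0 - θstar‖ ^ 2 / (2 * k * α) :=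
  gradient_descent_convergence_general d ℓ g L α hL hα hαL hconv hgrad hlip θstar θ hstep k hk
end

section
/- With A the Shapley-value matrix defined by A[i,S] = (1/n)·C(n−1, |S|−1)⁻¹ if i ∈ S and −(1/n)·C(n−1, |S|)⁻¹ otherwise (for S ranging over all subsets of an n-element set), each row of A has ℓ₁-norm exactly 2: ∑_{S ⊆ D} |A[i,S]| = 2 for every player i. -/
/-- The Shapley matrix `A[i,S]`: `(1/n)·C(n−1,|S|−1)⁻¹` if `i ∈ S`, and
`−(1/n)·C(n−1,|S|)⁻¹` otherwise. -/
noncomputable def shapleyMatrix (n : ℕ) (i : Fin n) (S : Finset (Fin n)) : ℝ :=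
  if i ∈ S then (1 / n : ℝ) * ((n - 1).choose (S.card - 1) : ℝ)⁻¹
  else -(1 / n : ℝ) * ((n - 1).choose S.card : ℝ)⁻¹

/-- Each row of the Shapley matrix has ℓ₁-norm exactly 2. -/
theorem shapleyMatrix_row_l1_norm (n : ℕ) (hn : 1 ≤ n) (i : Fin n) :
    ∑ S : Finset (Fin n), |shapleyMatrix n i S| = 2 := by
  have hnpos : (0:ℝ) < n := by exact_mod_cast hn
  set u : Finset (Fin n) := Finset.univ.erase i with hu
  have hiu : i ∉ u := Finset.notMem_erase i _
  have hcard : u.card = n - 1 := by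
    rw [hu, Finset.card_erase_of_mem (Finset.mem_univ i), Finset.card_univ, Fintype.card_fin]
  have huniv : (Finset.univ : Finset (Finset (Fin n))) = (insert i u).powerset := by
    rw [Finset.insert_erase (Finset.mem_univ i), Finset.powerset_univ]
  rw [huniv, Finset.sum_powerset_insert hiu]
  have h1 : ∀ t ∈ u.powerset, |shapleyMatrix n i t| = (1/n : ℝ) * ((n-1).choose t.card : ℝ)⁻¹ := by
    intro t ht
    have hit : i ∉ t := fun h => hiu (Finset.mem_powerset.mp ht h)
    have hle : t.card ≤ n - 1 := hcard ▸ Finset.card_le_card (Finset.mem_powerset.mp ht)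
    have hpos : (0:ℝ) < ((n-1).choose t.card : ℝ) := by
      exact_mod_cast Nat.choose_pos hle
    rw [shapleyMatrix, if_neg hit, abs_of_nonpos]
    · ring
    · have : (0:ℝ) ≤ (1/n : ℝ) * ((n-1).choose t.card : ℝ)⁻¹ :=
        mul_nonneg (by positivity) (inv_nonneg.mpr hpos.le)
      linarith
  have h2 : ∀ t ∈ u.powerset, |shapleyMatrix n i (insert i t)| =
      (1/n : ℝ) * ((n-1).choose t.card : ℝ)⁻¹ := by
    intro t ht
    have hit : i ∉ t := fun h => hiu (Finset.mem_powerset.mp ht h)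
    have hc : (insert i t).card - 1 = t.card := by
      rw [Finset.card_insert_of_notMem hit]; omega
    rw [shapleyMatrix, if_pos (Finset.mem_insert_self i t), hc, abs_of_nonneg]
    positivity
  rw [Finset.sum_congr rfl h1, Finset.sum_congr rfl h2, ← Finset.sum_add_distrib]
  have key : ∀ t ∈ u.powerset,
      ((1/n : ℝ) * ((n-1).choose t.card : ℝ)⁻¹ + (1/n : ℝ) * ((n-1).choose t.card : ℝ)⁻¹)
      = (2/n : ℝ) * ((n-1).choose t.card : ℝ)⁻¹ := by
    intro t _; ring
  rw [Finset.sum_congr rfl key, Finset.sum_powerset]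
  have inner : ∀ j ∈ Finset.range (u.card + 1),
      ∑ t ∈ u.powersetCard j, (2/n : ℝ) * ((n-1).choose t.card : ℝ)⁻¹ = 2/n := by
    intro j hj
    have hjle : j ≤ n - 1 := by
      have h := Finset.mem_range.mp hj
      rw [hcard] at h; omega
    have : ∀ t ∈ u.powersetCard j, (2/n : ℝ) * ((n-1).choose t.card : ℝ)⁻¹
        = (2/n : ℝ) * ((n-1).choose j : ℝ)⁻¹ := by
      intro t ht
      rw [(Finset.mem_powersetCard.mp ht).2]
    rw [Finset.sum_congr rfl this, Finset.sum_const, Finset.card_powersetCard, hcard,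
      nsmul_eq_mul]
    have hpos : (0:ℝ) < ((n-1).choose j : ℝ) := by exact_mod_cast Nat.choose_pos hjle
    field_simp
  rw [Finset.sum_congr rfl inner, Finset.sum_const, Finset.card_range, hcard, nsmul_eq_mul]
  have : ((n - 1 + 1 : ℕ) : ℝ) = n := by
    have : n - 1 + 1 = n := by omega
    rw [this]
  rw [this]
  field_simp
end
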